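/- arXiv:1710.03931 — 2 statements merged into one kernel-verified Lean document; each statement's English description precedes it below -/
import Mathlib

section
/- Let D be a rooted digraph with root r and let α be an ordinal. Suppose ⟨B_β : β < α⟩ is a sequence with B_β ∈ bubb_D(v_β) for some vertices v_β ∈ V−r, and write B_{<β} for the union of the B_γ with γ < β. If for each β < α either v_β = v_0 or v_β ∈ int_D(B_{<β}), then B_{<α} ∈ bubb_D(v_0). -/
namespace FlamePaper

universe u
variable {V : Type u}

/-- A (nonempty, repetition-free) directed path, given by the list of its vertices;
its edge set consists of the pairs of consecutive vertices. A one-vertex list is the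
trivial `v→v` path. -/
structure DiPath (V : Type u) where
  verts : List V
  ne : verts ≠ []
  nodup : verts.Nodup

namespace DiPath
variable (P : DiPath V)
def first : V := P.verts.head P.ne
def last : V := P.verts.getLast P.ne
def vertexSet : Set V := {x | x ∈ P.verts}
def edges : Set (V × V) := {e | e ∈ P.verts.zip P.verts.tail}
def internal : Set V := P.vertexSet \ {P.first, P.last}
/-- The last edge of `P` (as a set; empty for the trivial path). -/
def lastEdge : Set (V × V) := {e ∈ P.edges | e.2 = P.last}
end DiPath

/-- `P` is a path of the digraph `D`. -/
def IsPathIn (D : Set (V × V)) (P : DiPath V) : Prop := P.edges ⊆ D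

/-- `P` is an `a→b` path in `D`. -/
def IsPath (D : Set (V × V)) (a b : V) (P : DiPath V) : Prop :=
  IsPathIn D P ∧ P.first = a ∧ P.last = b

/-- The set of ingoing edges of `v` in `D`. -/
def inEdges (D : Set (V × V)) (v : V) : Set (V × V) := {e ∈ D | e.2 = v}

/-- The set of outgoing edges of `v` in `D`. -/
def outEdges (D : Set (V × V)) (v : V) : Set (V × V) := {e ∈ D | e.1 = v}

/-- A rooted digraph: the root has no ingoing edges. -/
def IsRooted (D : Set (V × V)) (r : V) : Prop := inEdges D r = ∅

/-- `Ps` is a system of internally disjoint `r→v` paths in `D`: any two distinct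
members share exactly the vertices `r` and `v`. -/
def IntDisjSystem (D : Set (V × V)) (r v : V) (Ps : Set (DiPath V)) : Prop :=
  (∀ P ∈ Ps, IsPath D r v P) ∧
  ∀ P ∈ Ps, ∀ Q ∈ Ps, P ≠ Q → P.vertexSet ∩ Q.vertexSet = {r, v}

/-- `A_last(Ps)`: the set of last edges of the paths in `Ps`. -/
def lastEdges (Ps : Set (DiPath V)) : Set (V × V) := ⋃ P ∈ Ps, P.lastEdge

/-- `𝒢_D(v)`: the set of those `I ⊆ in_D(v)` which arise as the set of last edges
of a system of internally disjoint `r→v` paths of `D`. -/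
def GSet (D : Set (V × V)) (r v : V) : Set (Set (V × V)) :=
  {I | ∃ Ps, IntDisjSystem D r v Ps ∧ lastEdges Ps = I}

/-- `Ps ∈ ℑ_D(v)`: an internally disjoint system of `r→v` paths of `D` from each member
of which one can choose either an internal vertex or an edge so that the resulting set
meets every `r→v` path of `D`. -/
def EMSystem (D : Set (V × V)) (r v : V) (Ps : Set (DiPath V)) : Prop :=
  IntDisjSystem D r v Ps ∧
  ∃ sel : DiPath V → V ⊕ (V × V),
    (∀ P ∈ Ps, (∀ x, sel P = Sum.inl x → x ∈ P.internal) ∧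
              (∀ e, sel P = Sum.inr e → e ∈ P.edges)) ∧
    ∀ Q : DiPath V, IsPath D r v Q →
      ∃ P ∈ Ps, (∀ x, sel P = Sum.inl x → x ∈ Q.vertexSet) ∧
               (∀ e, sel P = Sum.inr e → e ∈ Q.edges)

/-- The path-system `Ps` lies in `L`. -/
def LiesIn (Ps : Set (DiPath V)) (L : Set (V × V)) : Prop := ∀ P ∈ Ps, IsPathIn L P

/-- `L` is a `D`-vertex-large spanning subdigraph of `D`. -/
def IsLarge (D L : Set (V × V)) (r : V) : Prop :=
  L ⊆ D ∧ ∀ v, v ≠ r → ∃ Ps, EMSystem D r v Ps ∧ LiesIn Ps L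

/-- `F` is a vertex-flame with root `r`. -/
def IsFlame (F : Set (V × V)) (r : V) : Prop :=
  ∀ v, v ≠ r → inEdges F v ∈ GSet F r v

/-- `F` is a quasi-vertex-flame with root `r`. -/
def IsQuasiFlame (F : Set (V × V)) (r : V) : Prop :=
  ∀ v, v ≠ r → ∀ I ⊆ inEdges F v, I.Finite → I ∈ GSet F r v

/-- `S` separates `b` from `a` in `D`: every `a→b` path of `D` meets `S`. -/
def Separates (D : Set (V × V)) (a b : V) (S : Set V) : Prop :=
  ∀ P : DiPath V, IsPath D a b P → (P.vertexSet ∩ S).Nonempty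

/-- `𝔖_D(v)`: the Erdős–Menger separations corresponding to `v`. -/
def SepSet (D : Set (V × V)) (r v : V) : Set (Set V) :=
  {S | r ∉ S ∧ v ∉ S ∧ Separates (D \ {(r, v)}) r v S ∧
    ∃ Ps, IntDisjSystem D r v Ps ∧
      ∃ sel : DiPath V → V, (∀ P ∈ Ps, sel P ∈ P.internal) ∧ S = sel '' Ps}

/-- The entrance of `X` with respect to `D`. -/
def entrance (D : Set (V × V)) (X : Set V) : Set V :=
  {v ∈ X | ∃ u, u ∉ X ∧ (u, v) ∈ D}

/-- `int_D(X) = X ∖ ent_D(X)`. -/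
def interiorSet (D : Set (V × V)) (X : Set V) : Set V := X \ entrance D X

/-- `B` is a `v`-bubble of `D` (with root `r`): `B ⊆ V − r` and there is a `v`-infan
`{P_u : u ∈ ent_D(B)}` in `D ∩ (B × B)` where `P_u` starts at `u`. -/
def IsBubble (D : Set (V × V)) (r v : V) (B : Set V) : Prop :=
  r ∉ B ∧
  ∃ F : V → DiPath V,
    (∀ u ∈ entrance D B, IsPath (D ∩ B ×ˢ B) u v (F u)) ∧
    ∀ u ∈ entrance D B, ∀ u' ∈ entrance D B, u ≠ u' →
      (F u).vertexSet ∩ (F u').vertexSet = {v}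

/-- `bubb_D(v)`. -/
def bubbles (D : Set (V × V)) (r v : V) : Set (Set V) := {B | IsBubble D r v B}

/-- `B_{v,D}`: the union of all `v`-bubbles of `D`. -/
def maxBubble (D : Set (V × V)) (r v : V) : Set V := ⋃₀ bubbles D r v

/-- `B_{S,v,D}`: the set of vertices `u` such that every `r→u` path of `D−rv` meets `S`. -/
def Bset (D : Set (V × V)) (r v : V) (S : Set V) : Set V :=
  {u | ∀ P : DiPath V, IsPath (D \ {(r, v)}) r u P → (P.vertexSet ∩ S).Nonempty}

/-- `Ps` is an `r`-fan in `D`: paths of `D` starting at `r`, any two distinct members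
having only the vertex `r` in common. -/
def IsRFan (D : Set (V × V)) (r : V) (Ps : Set (DiPath V)) : Prop :=
  (∀ P ∈ Ps, IsPathIn D P ∧ P.first = r) ∧
  ∀ P ∈ Ps, ∀ Q ∈ Ps, P ≠ Q → P.vertexSet ∩ Q.vertexSet = {r}

/-- The set of first vertices of the paths in `Ps`. -/
def Vfirst (Ps : Set (DiPath V)) : Set V := DiPath.first '' Ps

/-- The set of last vertices of the paths in `Ps`. -/
def Vlast (Ps : Set (DiPath V)) : Set V := DiPath.last '' Ps

/-- `P` is an `X→Y` path in `D`: exactly its first vertex lies in `X` and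
exactly its last vertex lies in `Y`. -/
def IsXYPath (D : Set (V × V)) (X Y : Set V) (P : DiPath V) : Prop :=
  IsPathIn D P ∧ P.vertexSet ∩ X = {P.first} ∧ P.vertexSet ∩ Y = {P.last}

/-- `Ps` is a system of pairwise (vertex-)disjoint `X→Y` paths of `D`. -/
def DisjXYSystem (D : Set (V × V)) (X Y : Set V) (Ps : Set (DiPath V)) : Prop :=
  (∀ P ∈ Ps, IsXYPath D X Y P) ∧
  ∀ P ∈ Ps, ∀ Q ∈ Ps, P ≠ Q → P.vertexSet ∩ Q.vertexSet = ∅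

/-- `κ_D(r,v)`: the maximum size of a (finite) system of internally disjoint `r→v`
paths of `D`. -/
noncomputable def kappa (D : Set (V × V)) (r v : V) : ℕ :=
  sSup {n : ℕ | ∃ Ps : Set (DiPath V), IntDisjSystem D r v Ps ∧ Ps.Finite ∧ Ps.ncard = n}
/-! ### Auxiliary machinery for `bubble_chain` -/

section BubbleChainAux

open List Relation

attribute [local instance] Classical.propDecidable

variable {V : Type u}

/-- Consecutive pairs of a list. -/
def zc : List V → List (V × V)
  | [] => []
  | [_] => []
  | a :: b :: t => (a, b) :: zc (b :: t)

lemma zip_tail_eq_zc : ∀ l : List V, l.zip l.tail = zc l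
  | [] => rfl
  | [_] => rfl
  | a :: b :: t => by
      have := zip_tail_eq_zc (b :: t)
      simp only [List.tail_cons] at this ⊢
      rw [List.zip_cons_cons, this, zc]

lemma mem_zc : ∀ (l : List V), ∀ e ∈ zc l, e.1 ∈ l ∧ e.2 ∈ l
  | [], e, he => by simp [zc] at he
  | [_], e, he => by simp [zc] at he
  | a :: b :: t, e, he => by
      rw [zc, List.mem_cons] at he
      rcases he with rfl | he
      · exact ⟨by simp, by simp⟩
      · have := mem_zc (b :: t) e he
        exact ⟨List.mem_cons_of_mem _ this.1, List.mem_cons_of_mem _ this.2⟩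

lemma zc_append : ∀ (l1 : List V) (a : V) (l2 : List V),
    zc (l1 ++ a :: l2) = zc (l1 ++ [a]) ++ zc (a :: l2)
  | [], a, l2 => by simp [zc]
  | [b], a, l2 => by simp [zc]
  | b :: c :: t, a, l2 => by
      have ih := zc_append (c :: t) a l2
      simp only [List.cons_append] at ih
      show zc (b :: c :: (t ++ a :: l2)) = zc (b :: c :: (t ++ [a])) ++ zc (a :: l2)
      rw [zc, ih]
      rfl

lemma zc_last : ∀ (l1 : List V) (h : l1 ≠ []) (a : V), (l1.getLast h, a) ∈ zc (l1 ++ [a])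
  | [b], _, a => by simp [zc]
  | b :: c :: t, _, a => by
      have := zc_last (c :: t) (by simp) a
      rw [List.getLast_cons (by simp : (c :: t : List V) ≠ [])]
      show _ ∈ zc (b :: c :: (t ++ [a]))
      rw [zc]
      exact List.mem_cons_of_mem _ this

lemma zc_vertex : ∀ (l : List V) (h : l ≠ []) (z : V), z ∈ l →
    z = l.head h ∨ ∃ a, (a, z) ∈ zc l
  | [b], _, z, hz => by
      left; simpa using hz
  | b :: c :: t, _, z, hz => by
      rcases List.mem_cons.1 hz with rfl | hz
      · left; rfl
      · rcases zc_vertex (c :: t) (by simp) z hz with h1 | ⟨a, ha⟩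
        · right; refine ⟨b, ?_⟩
          rw [zc, h1]
          simp
        · right; exact ⟨a, by rw [zc]; exact List.mem_cons_of_mem _ ha⟩

lemma eq_singleton_of_head_getLast {l : List V} {a : V} (hn : l.Nodup)
    (h1 : l.head? = some a) (h2 : l.getLast? = some a) : l = [a] := by
  cases l with
  | nil => simp at h1
  | cons b t =>
    have hb : b = a := by simpa using h1
    subst hb
    cases t with
    | nil => rfl
    | cons c t' =>
      exfalso
      have hne : (c :: t' : List V) ≠ [] := by simp
      have : (b :: c :: t').getLast (by simp) = b := by
        have := List.getLast?_eq_getLast (l := b :: c :: t') (by simp)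
        rw [h2] at this
        exact (Option.some.inj this).symm
      rw [List.getLast_cons hne] at this
      have hmem : b ∈ c :: t' := this ▸ List.getLast_mem hne
      exact (List.nodup_cons.1 hn).1 hmem

variable (D : Set (V × V)) (B : Ordinal → Set V) (α : Ordinal) (v : Ordinal → V)
  (fan : Ordinal → V → DiPath V)

/-- `⋃ γ < b, B γ`. -/
def Uset (b : Ordinal) : Set V := ⋃ γ < b, B γ

lemma mem_Uset {b : Ordinal} {u : V} : u ∈ Uset B b ↔ ∃ γ < b, u ∈ B γ := by
  simp [Uset]

lemma Uset_mono {a b : Ordinal} (h : a ≤ b) : Uset B a ⊆ Uset B b := by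
  intro z hz
  rcases (mem_Uset B).1 hz with ⟨γ, h1, h2⟩
  exact (mem_Uset B).2 ⟨γ, lt_of_lt_of_le h1 h, h2⟩

lemma lt_add_one_self (a : Ordinal) : a < a + 1 := by
  rw [Ordinal.add_one_eq_succ]; exact Order.lt_succ a

lemma Uset_succ_sub {a b : Ordinal} (h : a < b) : Uset B (a + 1) ⊆ Uset B b := by
  intro z hz
  rcases (mem_Uset B).1 hz with ⟨γ, h1, h2⟩
  rw [Ordinal.add_one_eq_succ, Order.lt_succ_iff] at h1
  exact (mem_Uset B).2 ⟨γ, lt_of_le_of_lt h1 h, h2⟩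

/-- Least index of a bubble containing `u`. -/
noncomputable def dlt (u : V) : Ordinal := sInf {δ | δ < α ∧ u ∈ B δ}

/-- `u` lies in the union of the bubbles. -/
def inW (u : V) : Prop := u ∈ Uset B α

lemma dlt_spec {u : V} (h : inW B α u) : dlt B α u < α ∧ u ∈ B (dlt B α u) := by
  have hne : {δ | δ < α ∧ u ∈ B δ}.Nonempty := by
    rcases (mem_Uset B).1 h with ⟨γ, h1, h2⟩
    exact ⟨γ, h1, h2⟩
  exact csInf_mem hne

lemma dlt_le {u : V} {γ : Ordinal} (hγ : γ < α) (hu : u ∈ B γ) : dlt B α u ≤ γ :=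
  csInf_le (OrderBot.bddBelow _) ⟨hγ, hu⟩

lemma not_mem_Uset_dlt {u : V} (h : inW B α u) : u ∉ Uset B (dlt B α u) := by
  intro hc
  rcases (mem_Uset B).1 hc with ⟨γ, h1, h2⟩
  exact absurd (dlt_le B α (lt_trans h1 (dlt_spec B α h).1) h2) (not_le.2 h1)

lemma mem_Uset_dlt_succ {u : V} (h : inW B α u) : u ∈ Uset B (dlt B α u + 1) :=
  (mem_Uset B).2 ⟨dlt B α u, lt_add_one_self _, (dlt_spec B α h).2⟩

lemma dlt_lt_of_mem {u z : V} (h : inW B α u) (hz : z ∈ Uset B (dlt B α u)) :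
    inW B α z ∧ dlt B α z < dlt B α u := by
  rcases (mem_Uset B).1 hz with ⟨γ, h1, h2⟩
  have hγα : γ < α := lt_trans h1 (dlt_spec B α h).1
  exact ⟨(mem_Uset B).2 ⟨γ, hγα, h2⟩, lt_of_le_of_lt (dlt_le B α hγα h2) h1⟩

/-- Boolean predicate: not in `Uset B δ`. -/
noncomputable def outP (δ : Ordinal) : V → Bool := fun z => !(decide (z ∈ Uset B δ))

lemma outP_eq_true {δ : Ordinal} {z : V} : outP B δ z = true ↔ z ∉ Uset B δ := by
  simp [outP]

noncomputable def twl (u : V) : List V :=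
  (fan (dlt B α u) u).verts.takeWhile (outP B (dlt B α u))

noncomputable def dwl (u : V) : List V :=
  (fan (dlt B α u) u).verts.dropWhile (outP B (dlt B α u))

noncomputable def xvert (u : V) : V := (dwl B α fan u).head?.getD u

/-- The fan path at `u`'s level hits `Uset B (dlt u)`. -/
def hitC (u : V) : Prop :=
  ∃ z ∈ (fan (dlt B α u) u).verts, z ∈ Uset B (dlt B α u)

lemma dwl_ne_nil {u : V} (hhit : hitC B α fan u) : dwl B α fan u ≠ [] := by
  rw [dwl, Ne, List.dropWhile_eq_nil_iff]
  push_neg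
  rcases hhit with ⟨z, hz1, hz2⟩
  exact ⟨z, hz1, fun hc => ((outP_eq_true B).1 hc) hz2⟩

lemma xvert_eq_head {u : V} (hhit : hitC B α fan u) :
    xvert B α fan u = (dwl B α fan u).head (dwl_ne_nil B α fan hhit) := by
  rw [xvert, List.head?_eq_head (dwl_ne_nil B α fan hhit)]
  rfl

lemma xvert_mem_Uset {u : V} (hhit : hitC B α fan u) :
    xvert B α fan u ∈ Uset B (dlt B α u) := by
  have hne : (fan (dlt B α u) u).verts.dropWhile (outP B (dlt B α u)) ≠ [] :=
    dwl_ne_nil B α fan hhit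
  rw [xvert_eq_head B α fan hhit]
  by_contra hc
  have h2 : outP B (dlt B α u)
      ((List.dropWhile (outP B (dlt B α u)) (fan (dlt B α u) u).verts).head hne) = true :=
    (outP_eq_true B).2 hc
  rw [List.head_dropWhile_not _ hne] at h2
  exact Bool.false_ne_true h2

lemma xvert_lt {u : V} (hin : inW B α u) (hhit : hitC B α fan u) :
    inW B α (xvert B α fan u) ∧ dlt B α (xvert B α fan u) < dlt B α u :=
  dlt_lt_of_mem B α hin (xvert_mem_Uset B α fan hhit)

/-- The combined fan path: follow the fan of the first bubble containing `u` until it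
first meets an earlier bubble, then recurse. -/
noncomputable def Qlist (u : V) : List V :=
  if h : inW B α u ∧ hitC B α fan u then
    twl B α fan u ++ Qlist (xvert B α fan u)
  else (fan (dlt B α u) u).verts
termination_by dlt B α u
decreasing_by exact (xvert_lt B α fan h.1 h.2).2

/-- Eligibility: `u` belongs to the union, with an in-edge from outside all bubbles up
to (and including) its level. -/
def Elig (u : V) : Prop :=
  inW B α u ∧ u ∈ entrance D (Uset B (dlt B α u + 1))

lemma elig_entB {u : V} (he : Elig D B α u) : u ∈ entrance D (B (dlt B α u)) := by
  obtain ⟨hin, hmem, w, hw, hwD⟩ := he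
  refine ⟨(dlt_spec B α hin).2, w, fun hc => hw ?_, hwD⟩
  exact (mem_Uset B).2 ⟨dlt B α u, lt_add_one_self _, hc⟩

lemma path_verts_sub {D' : Set (V × V)} {X : Set V} {a b : V} {P : DiPath V}
    (hP : IsPath (D' ∩ X ×ˢ X) a b P) (ha : a ∈ X) : ∀ z ∈ P.verts, z ∈ X := by
  intro z hz
  rcases zc_vertex P.verts P.ne z hz with h1 | ⟨c, hc⟩
  · rw [h1]
    have : P.verts.head P.ne = a := hP.2.1
    rw [this]; exact ha
  · have : (c, z) ∈ P.edges := by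
      rw [DiPath.edges, Set.mem_setOf_eq, zip_tail_eq_zc]
      exact hc
    exact (hP.1 this).2.2

lemma path_edges_D {D' : Set (V × V)} {X : Set V} {a b : V} {P : DiPath V}
    (hP : IsPath (D' ∩ X ×ˢ X) a b P) : ∀ e ∈ zc P.verts, e ∈ D' := by
  intro e he
  have : e ∈ P.edges := by
    rw [DiPath.edges, Set.mem_setOf_eq, zip_tail_eq_zc]; exact he
  exact (hP.1 this).1

/-- One recursion step. -/
def Step (a b : V) : Prop := (inW B α a ∧ hitC B α fan a) ∧ b = xvert B α fan a

section WithFan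

variable (Hfan1 : ∀ β < α, ∀ u ∈ entrance D (B β),
    IsPath (D ∩ B β ×ˢ B β) u (v β) (fan β u))

include Hfan1

/-- Facts about the first hit `xvert u`. -/
lemma xfacts {u : V} (he : Elig D B α u) (hhit : hitC B α fan u) :
    (twl B α fan u).head? = some u ∧
    (∀ z ∈ twl B α fan u, z ∉ Uset B (dlt B α u)) ∧
    (fan (dlt B α u) u).verts = twl B α fan u ++ xvert B α fan u :: (dwl B α fan u).tail ∧
    xvert B α fan u ∈ entrance D (Uset B (dlt B α u)) ∧
    Elig D B α (xvert B α fan u) ∧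
    dlt B α (xvert B α fan u) < dlt B α u ∧
    xvert B α fan u ∈ (fan (dlt B α u) u).verts := by
  set δ := dlt B α u with hδdef
  have hδ : δ < α := (dlt_spec B α he.1).1
  have hentB := elig_entB D B α he
  have hP := Hfan1 δ hδ u hentB
  have hhead : (fan δ u).verts.head (fan δ u).ne = u := hP.2.1
  have hcons : (fan δ u).verts = u :: (fan δ u).verts.tail := by
    conv_lhs => rw [← List.cons_head_tail (fan δ u).ne]
    rw [hhead]
  have huout : outP B δ u = true := (outP_eq_true B).2 (not_mem_Uset_dlt B α he.1)
  have htwhead : (twl B α fan u).head? = some u := by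
    rw [twl, ← hδdef]
    conv_lhs => rw [hcons]
    rw [List.takeWhile_cons_of_pos huout]
    rfl
  have htwne : twl B α fan u ≠ [] := by
    intro hc; rw [hc] at htwhead; simp at htwhead
  have htwnot : ∀ z ∈ twl B α fan u, z ∉ Uset B δ := by
    intro z hz
    exact (outP_eq_true B).1 (List.mem_takeWhile_imp hz)
  have hx := xvert_mem_Uset B α fan hhit
  have hxlt := xvert_lt B α fan he.1 hhit
  have hsplit : (fan δ u).verts = twl B α fan u ++ xvert B α fan u :: (dwl B α fan u).tail := by
    rw [xvert_eq_head B α fan hhit, List.cons_head_tail, twl, dwl, ← hδdef,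
      List.takeWhile_append_dropWhile]
  -- the predecessor edge
  have hedge : ((twl B α fan u).getLast htwne, xvert B α fan u) ∈ zc (fan δ u).verts := by
    rw [hsplit, zc_append]
    exact List.mem_append_left _ (zc_last _ htwne _)
  have hedgeD : ((twl B α fan u).getLast htwne, xvert B α fan u) ∈ D :=
    path_edges_D hP _ hedge
  have hlastnot : (twl B α fan u).getLast htwne ∉ Uset B δ :=
    htwnot _ (List.getLast_mem htwne)
  have hxent : xvert B α fan u ∈ entrance D (Uset B δ) :=
    ⟨hx, _, hlastnot, hedgeD⟩
  have hxelig : Elig D B α (xvert B α fan u) := by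
    refine ⟨hxlt.1, mem_Uset_dlt_succ B α hxlt.1, _,
      fun hc => hlastnot (Uset_succ_sub B hxlt.2 hc), hedgeD⟩
  have hxmem : xvert B α fan u ∈ (fan δ u).verts := by
    rw [hsplit]
    exact List.mem_append_right _ List.mem_cons_self
  exact ⟨htwhead, htwnot, hsplit, hxent, hxelig, hxlt.2, hxmem⟩

lemma chainRTG {a b : V} (ha : Elig D B α a) (h : ReflTransGen (Step B α fan) a b) :
    Elig D B α b ∧ dlt B α b ≤ dlt B α a := by
  induction h with
  | refl => exact ⟨ha, le_rfl⟩
  | tail _ hbc ih =>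
    obtain ⟨hec, hdc⟩ := ih
    obtain ⟨⟨_, hhit⟩, rfl⟩ := hbc
    obtain ⟨_, _, _, _, helig, hlt, _⟩ := xfacts D B α v fan Hfan1 hec hhit
    exact ⟨helig, le_of_lt (lt_of_lt_of_le hlt hdc)⟩

end WithFan

section WithAll

variable (Hfan1 : ∀ β < α, ∀ u ∈ entrance D (B β),
    IsPath (D ∩ B β ×ˢ B β) u (v β) (fan β u))
  (Hfan2 : ∀ β < α, ∀ u ∈ entrance D (B β), ∀ u' ∈ entrance D (B β), u ≠ u' →
    (fan β u).vertexSet ∩ (fan β u').vertexSet = {v β})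
  (Hint : ∀ β < α, v β = v 0 ∨ v β ∈ interiorSet D (Uset B β))

include Hfan1 Hfan2 Hint

lemma E0 {c : V} (hc : Elig D B α c) (hhit : hitC B α fan c) {M : Ordinal}
    (hM : dlt B α c < M) (hent : xvert B α fan c ∈ entrance D (Uset B M)) :
    xvert B α fan c = v 0 := by
  obtain ⟨_, _, _, _, _, _, hxmem⟩ := xfacts D B α v fan Hfan1 hc hhit
  set b := xvert B α fan c with hbdef
  set δc := dlt B α c with hδdef
  have hδα : δc < α := (dlt_spec B α hc.1).1
  have hcent : c ∈ entrance D (B δc) := elig_entB D B α hc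
  have hPc := Hfan1 δc hδα c hcent
  have hbB : b ∈ B δc := path_verts_sub hPc hcent.1 b hxmem
  obtain ⟨hbM, z0, hz0, hz0D⟩ := hent
  have hBsub : B δc ⊆ Uset B M := fun z hz => (mem_Uset B).2 ⟨δc, hM, hz⟩
  have hbentB : b ∈ entrance D (B δc) := ⟨hbB, z0, fun hc' => hz0 (hBsub hc'), hz0D⟩
  have hbU : b ∈ Uset B δc := xvert_mem_Uset B α fan hhit
  have hbc : c ≠ b := by
    intro hcb
    have : c ∈ Uset B δc := by rw [hcb]; exact hbU
    exact not_mem_Uset_dlt B α hc.1 this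
  have hfan2 := Hfan2 δc hδα c hcent b hbentB hbc
  have hbfan : b ∈ (fan δc b).vertexSet := by
    have hh : (fan δc b).verts.head (fan δc b).ne = b := (Hfan1 δc hδα b hbentB).2.1
    have hb1 : (fan δc b).verts.head (fan δc b).ne ∈ (fan δc b).verts :=
      List.head_mem _
    rw [hh] at hb1
    exact hb1
  have hbv : b = v δc := by
    have : b ∈ (fan δc c).vertexSet ∩ (fan δc b).vertexSet := ⟨hxmem, hbfan⟩
    rw [hfan2] at this
    exact this
  rcases Hint δc hδα with h0 | hintr
  · rw [hbv, h0]
  · exfalso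
    have hbentU : b ∈ entrance D (Uset B δc) :=
      ⟨hbU, z0, fun hc' => hz0 (Uset_mono B (le_of_lt hM) hc'), hz0D⟩
    rw [← hbv] at hintr
    exact hintr.2 hbentU

lemma TGE {a b : V} (ha : Elig D B α a) (h : TransGen (Step B α fan) a b) {M : Ordinal}
    (hM : dlt B α a < M) (hb : b ∈ entrance D (Uset B M)) : b = v 0 := by
  obtain ⟨c, hrtg, hstep⟩ := (TransGen.tail'_iff).1 h
  obtain ⟨hec, hdc⟩ := chainRTG D B α v fan Hfan1 ha hrtg
  obtain ⟨⟨_, hhit⟩, rfl⟩ := hstep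
  exact E0 D B α v fan Hfan1 Hfan2 Hint hec hhit (lt_of_le_of_lt hdc hM) hb

lemma INV : ∀ (o : Ordinal) (u : V), dlt B α u < o → Elig D B α u →
    (Qlist B α fan u).Nodup ∧ (Qlist B α fan u).head? = some u ∧
    (Qlist B α fan u).getLast? = some (v 0) ∧
    (∀ z ∈ Qlist B α fan u, z ∈ Uset B (dlt B α u + 1)) ∧
    (∀ e ∈ zc (Qlist B α fan u), e ∈ D) := by
  intro o
  induction o using Ordinal.induction with
  | h o IH =>
    intro u hlt helig
    set δ := dlt B α u with hδdef
    have hδ : δ < α := (dlt_spec B α helig.1).1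
    have hentB := elig_entB D B α helig
    have hP := Hfan1 δ hδ u hentB
    have hvsub : ∀ z ∈ (fan δ u).verts, z ∈ B δ := path_verts_sub hP hentB.1
    by_cases hhit : hitC B α fan u
    · obtain ⟨htwhead, htwnot, hsplit, hxent, hxelig, hxlt, hxmem⟩ :=
        xfacts D B α v fan Hfan1 helig hhit
      have hQ : Qlist B α fan u = twl B α fan u ++ Qlist B α fan (xvert B α fan u) := by
        rw [Qlist]
        exact dif_pos ⟨helig.1, hhit⟩
      obtain ⟨ihN, ihH, ihL, ihS, ihE⟩ := IH δ hlt (xvert B α fan u) hxlt hxelig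
      have hQxne : Qlist B α fan (xvert B α fan u) ≠ [] := by
        intro hc; rw [hc] at ihH; simp at ihH
      have htwne : twl B α fan u ≠ [] := by
        intro hc; rw [hc] at htwhead; simp at htwhead
      have hQxsub : ∀ z ∈ Qlist B α fan (xvert B α fan u), z ∈ Uset B δ :=
        fun z hz => Uset_succ_sub B hxlt (ihS z hz)
      have htwsub : ∀ z ∈ twl B α fan u, z ∈ (fan δ u).verts := by
        intro z hz
        exact (List.takeWhile_prefix _).sublist.mem hz
      constructor
      · rw [hQ]
        refine List.Nodup.append ?_ ihN ?_
        · exact ((fan δ u).nodup).sublist (List.takeWhile_prefix _).sublist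
        · intro z hz1 hz2
          exact htwnot z hz1 (hQxsub z hz2)
      refine ⟨?_, ?_, ?_, ?_⟩
      · rw [hQ, List.head?_append_of_ne_nil _ htwne, htwhead]
      · rw [hQ, List.getLast?_append_of_ne_nil _ hQxne, ihL]
      · intro z hz
        rw [hQ, List.mem_append] at hz
        rcases hz with hz | hz
        · exact (mem_Uset B).2 ⟨δ, lt_add_one_self _, hvsub z (htwsub z hz)⟩
        · exact Uset_mono B (le_of_lt (lt_add_one_self δ)) (hQxsub z hz)
      · intro e he
        have hxhead : Qlist B α fan (xvert B α fan u)
            = xvert B α fan u :: (Qlist B α fan (xvert B α fan u)).tail := by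
          conv_lhs => rw [← List.cons_head_tail hQxne]
          congr 1
          have := List.head?_eq_head hQxne
          rw [ihH] at this
          exact (Option.some.inj this).symm
        rw [hQ, hxhead, zc_append, List.mem_append] at he
        rcases he with he | he
        · have : e ∈ zc (fan δ u).verts := by
            rw [hsplit, zc_append]
            exact List.mem_append_left _ he
          exact path_edges_D hP e this
        · rw [← hxhead] at he
          exact ihE e he
    · have hQ : Qlist B α fan u = (fan δ u).verts := by
        rw [Qlist]
        exact dif_neg (fun hc => hhit hc.2)
      have hnot : ∀ z ∈ (fan δ u).verts, z ∉ Uset B δ := by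
        rw [hitC, ← hδdef] at hhit
        push_neg at hhit
        exact hhit
      have hlast : (fan δ u).verts.getLast (fan δ u).ne = v δ := hP.2.2
      have hvδ : v δ = v 0 := by
        rcases Hint δ hδ with h0 | hintr
        · exact h0
        · exfalso
          have : v δ ∈ (fan δ u).verts := hlast ▸ List.getLast_mem (fan δ u).ne
          exact hnot _ this hintr.1
      have hhd : (fan δ u).verts.head (fan δ u).ne = u := hP.2.1
      refine ⟨hQ ▸ (fan δ u).nodup, ?_, ?_, ?_, ?_⟩
      · rw [hQ, List.head?_eq_head (fan δ u).ne, hhd]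
      · rw [hQ, List.getLast?_eq_getLast (fan δ u).ne, hlast, hvδ]
      · intro z hz
        rw [hQ] at hz
        exact (mem_Uset B).2 ⟨δ, lt_add_one_self _, hvsub z hz⟩
      · intro e he
        rw [hQ] at he
        exact path_edges_D hP e he

lemma INV' {u : V} (helig : Elig D B α u) :
    (Qlist B α fan u).Nodup ∧ (Qlist B α fan u).head? = some u ∧
    (Qlist B α fan u).getLast? = some (v 0) ∧
    (∀ z ∈ Qlist B α fan u, z ∈ Uset B (dlt B α u + 1)) ∧
    (∀ e ∈ zc (Qlist B α fan u), e ∈ D) :=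
  INV D B α v fan Hfan1 Hfan2 Hint (dlt B α u + 1) u (lt_add_one_self _) helig

lemma Qtriv {u : V} (helig : Elig D B α u) (hu : u = v 0) :
    Qlist B α fan u = [v 0] := by
  obtain ⟨hN, hH, hL, _, _⟩ := INV' D B α v fan Hfan1 Hfan2 Hint helig
  exact eq_singleton_of_head_getLast hN (hu ▸ hH) hL

lemma Q_ne {u : V} (h : Elig D B α u) : Qlist B α fan u ≠ [] := by
  intro hc
  have h2 := (INV' D B α v fan Hfan1 Hfan2 Hint h).2.1
  rw [hc] at h2
  simp at h2

lemma disjCore (o : Ordinal)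
    (IH : ∀ k < o, ∀ y y' : V, Elig D B α y → Elig D B α y' → y ≠ y' →
      dlt B α y < k → dlt B α y' < k →
      (∀ z, z ∈ Qlist B α fan y → z ∈ Qlist B α fan y' → z = v 0) ∨
        Relation.TransGen (Step B α fan) y y' ∨ Relation.TransGen (Step B α fan) y' y)
    {y y' : V} (hy : Elig D B α y) (hy' : Elig D B α y') (hne : y ≠ y')
    (hle : dlt B α y' ≤ dlt B α y) (ho : dlt B α y < o) :
    (∀ z, z ∈ Qlist B α fan y → z ∈ Qlist B α fan y' → z = v 0) ∨
      Relation.TransGen (Step B α fan) y y' ∨ Relation.TransGen (Step B α fan) y' y := by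
  have hδα : dlt B α y < α := (dlt_spec B α hy.1).1
  have hentB : y ∈ entrance D (B (dlt B α y)) := elig_entB D B α hy
  have hPy := Hfan1 _ hδα y hentB
  have hsuby : ∀ z ∈ (fan (dlt B α y) y).verts, z ∈ B (dlt B α y) :=
    path_verts_sub hPy hentB.1
  have hQS' : ∀ z ∈ Qlist B α fan y', z ∈ Uset B (dlt B α y' + 1) :=
    (INV' D B α v fan Hfan1 Hfan2 Hint hy').2.2.2.1
  have hv0 : ∀ z : V, z = v (dlt B α y) → z ∉ Uset B (dlt B α y) → z = v 0 := by
    intro z h1 h2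
    rcases Hint _ hδα with h0 | hintr
    · rw [h1, h0]
    · exact absurd (h1 ▸ hintr.1) h2
  by_cases hhit : hitC B α fan y
  · obtain ⟨htwhead, htwnot, hsplit, hxent, hxelig, hxlt, hxmem⟩ :=
      xfacts D B α v fan Hfan1 hy hhit
    have hQ : Qlist B α fan y = twl B α fan y ++ Qlist B α fan (xvert B α fan y) := by
      rw [Qlist]; exact dif_pos ⟨hy.1, hhit⟩
    have hQxsub : ∀ z ∈ Qlist B α fan (xvert B α fan y), z ∈ Uset B (dlt B α y) :=
      fun z hz => Uset_succ_sub B hxlt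
        ((INV' D B α v fan Hfan1 Hfan2 Hint hxelig).2.2.2.1 z hz)
    have htwsub : ∀ z ∈ twl B α fan y, z ∈ (fan (dlt B α y) y).verts :=
      fun z hz => (List.takeWhile_prefix _).sublist.mem hz
    rcases lt_or_eq_of_le hle with hlt | heq
    · -- strictly lower level on the right
      have hsub' : ∀ z ∈ Qlist B α fan y', z ∈ Uset B (dlt B α y) :=
        fun z hz => Uset_succ_sub B hlt (hQS' z hz)
      by_cases hxy : xvert B α fan y = y'
      · exact Or.inr (Or.inl (Relation.TransGen.single ⟨⟨hy.1, hhit⟩, hxy.symm⟩))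
      · rcases IH (dlt B α y) ho (xvert B α fan y) y' hxelig hy' hxy hxlt hlt with
          hL | hT | hT'
        · refine Or.inl fun z hz1 hz2 => ?_
          rw [hQ, List.mem_append] at hz1
          rcases hz1 with hz1 | hz1
          · exact absurd (hsub' z hz2) (htwnot z hz1)
          · exact hL z hz1 hz2
        · exact Or.inr (Or.inl (Relation.TransGen.head ⟨⟨hy.1, hhit⟩, rfl⟩ hT))
        · have hx0 : xvert B α fan y = v 0 :=
            TGE D B α v fan Hfan1 Hfan2 Hint hy' hT' hlt hxent
          have hQx : Qlist B α fan (xvert B α fan y) = [v 0] :=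
            Qtriv D B α v fan Hfan1 Hfan2 Hint hxelig hx0
          refine Or.inl fun z hz1 hz2 => ?_
          rw [hQ, List.mem_append] at hz1
          rcases hz1 with hz1 | hz1
          · exact absurd (hsub' z hz2) (htwnot z hz1)
          · rw [hQx] at hz1; simpa using hz1
    · -- equal levels
      have hentB' : y' ∈ entrance D (B (dlt B α y)) := by
        have h1 := elig_entB D B α hy'; rw [heq] at h1; exact h1
      have hvv : ∀ z : V, z ∈ (fan (dlt B α y) y).verts →
          z ∈ (fan (dlt B α y') y').verts → z = v (dlt B α y) := by
        intro z h1 h2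
        rw [heq] at h2
        have hz : z ∈ (fan (dlt B α y) y).vertexSet ∩ (fan (dlt B α y) y').vertexSet :=
          ⟨h1, h2⟩
        rw [Hfan2 _ hδα y hentB y' hentB' hne] at hz
        exact hz
      by_cases hhit' : hitC B α fan y'
      · obtain ⟨htwhead', htwnot', hsplit', hxent', hxelig', hxlt', hxmem'⟩ :=
          xfacts D B α v fan Hfan1 hy' hhit'
        rw [heq] at htwnot' hxent' hxlt'
        have hQ' : Qlist B α fan y'
            = twl B α fan y' ++ Qlist B α fan (xvert B α fan y') := by
          rw [Qlist]; exact dif_pos ⟨hy'.1, hhit'⟩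
        have htwsub' : ∀ z ∈ twl B α fan y', z ∈ (fan (dlt B α y') y').verts :=
          fun z hz => (List.takeWhile_prefix _).sublist.mem hz
        have hQxsub' : ∀ z ∈ Qlist B α fan (xvert B α fan y'), z ∈ Uset B (dlt B α y) :=
          fun z hz => Uset_succ_sub B hxlt'
            ((INV' D B α v fan Hfan1 Hfan2 Hint hxelig').2.2.2.1 z hz)
        refine Or.inl fun z hz1 hz2 => ?_
        rw [hQ, List.mem_append] at hz1
        rw [hQ', List.mem_append] at hz2
        rcases hz1 with hz1 | hz1 <;> rcases hz2 with hz2 | hz2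
        · exact hv0 z (hvv z (htwsub z hz1) (htwsub' z hz2)) (htwnot z hz1)
        · exact absurd (hQxsub' z hz2) (htwnot z hz1)
        · exact absurd (hQxsub z hz1) (htwnot' z hz2)
        · by_cases hxx : xvert B α fan y = xvert B α fan y'
          · have hxm2 : xvert B α fan y ∈ (fan (dlt B α y') y').verts := by
              rw [hxx]; exact hxmem'
            have hxv : xvert B α fan y = v (dlt B α y) := hvv _ hxmem hxm2
            have hx0 : xvert B α fan y = v 0 := by
              rcases Hint _ hδα with h0 | hintr
              · rw [hxv, h0]
              · exfalso
                have h3 := hxent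
                rw [hxv] at h3
                exact hintr.2 h3
            have hQx : Qlist B α fan (xvert B α fan y) = [v 0] :=
              Qtriv D B α v fan Hfan1 Hfan2 Hint hxelig hx0
            rw [hQx] at hz1; simpa using hz1
          · rcases IH (dlt B α y) ho (xvert B α fan y) (xvert B α fan y')
                hxelig hxelig' hxx hxlt hxlt' with hL | hT | hT'
            · exact hL z hz1 hz2
            · have hx0 : xvert B α fan y' = v 0 :=
                TGE D B α v fan Hfan1 Hfan2 Hint hxelig hT hxlt hxent'
              rw [Qtriv D B α v fan Hfan1 Hfan2 Hint hxelig' hx0] at hz2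
              simpa using hz2
            · have hx0 : xvert B α fan y = v 0 :=
                TGE D B α v fan Hfan1 Hfan2 Hint hxelig' hT' hxlt' hxent
              rw [Qtriv D B α v fan Hfan1 Hfan2 Hint hxelig hx0] at hz1
              simpa using hz1
      · -- y' does not hit
        have hQ' : Qlist B α fan y' = (fan (dlt B α y') y').verts := by
          rw [Qlist]; exact dif_neg (fun hc => hhit' hc.2)
        have hnot' : ∀ z ∈ (fan (dlt B α y') y').verts, z ∉ Uset B (dlt B α y') := by
          rw [hitC] at hhit'
          push_neg at hhit'
          exact hhit'
        refine Or.inl fun z hz1 hz2 => ?_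
        rw [hQ, List.mem_append] at hz1
        rw [hQ'] at hz2
        rcases hz1 with hz1 | hz1
        · exact hv0 z (hvv z (htwsub z hz1) hz2) (htwnot z hz1)
        · have h3 : z ∉ Uset B (dlt B α y) := by
            rw [← heq]; exact hnot' z hz2
          exact absurd (hQxsub z hz1) h3
  · -- y does not hit
    have hQ : Qlist B α fan y = (fan (dlt B α y) y).verts := by
      rw [Qlist]; exact dif_neg (fun hc => hhit hc.2)
    have hnot : ∀ z ∈ (fan (dlt B α y) y).verts, z ∉ Uset B (dlt B α y) := by
      rw [hitC] at hhit
      push_neg at hhit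
      exact hhit
    rcases lt_or_eq_of_le hle with hlt | heq
    · refine Or.inl fun z hz1 hz2 => ?_
      rw [hQ] at hz1
      exact absurd (Uset_succ_sub B hlt (hQS' z hz2)) (hnot z hz1)
    · have hentB' : y' ∈ entrance D (B (dlt B α y)) := by
        have h1 := elig_entB D B α hy'; rw [heq] at h1; exact h1
      have hvv : ∀ z : V, z ∈ (fan (dlt B α y) y).verts →
          z ∈ (fan (dlt B α y') y').verts → z = v (dlt B α y) := by
        intro z h1 h2
        rw [heq] at h2
        have hz : z ∈ (fan (dlt B α y) y).vertexSet ∩ (fan (dlt B α y) y').vertexSet :=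
          ⟨h1, h2⟩
        rw [Hfan2 _ hδα y hentB y' hentB' hne] at hz
        exact hz
      by_cases hhit' : hitC B α fan y'
      · obtain ⟨htwhead', htwnot', hsplit', hxent', hxelig', hxlt', hxmem'⟩ :=
          xfacts D B α v fan Hfan1 hy' hhit'
        rw [heq] at hxlt'
        have hQ' : Qlist B α fan y'
            = twl B α fan y' ++ Qlist B α fan (xvert B α fan y') := by
          rw [Qlist]; exact dif_pos ⟨hy'.1, hhit'⟩
        have htwsub' : ∀ z ∈ twl B α fan y', z ∈ (fan (dlt B α y') y').verts :=
          fun z hz => (List.takeWhile_prefix _).sublist.mem hz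
        have hQxsub' : ∀ z ∈ Qlist B α fan (xvert B α fan y'), z ∈ Uset B (dlt B α y) :=
          fun z hz => Uset_succ_sub B hxlt'
            ((INV' D B α v fan Hfan1 Hfan2 Hint hxelig').2.2.2.1 z hz)
        refine Or.inl fun z hz1 hz2 => ?_
        rw [hQ] at hz1
        rw [hQ', List.mem_append] at hz2
        rcases hz2 with hz2 | hz2
        · exact hv0 z (hvv z hz1 (htwsub' z hz2)) (hnot z hz1)
        · exact absurd (hQxsub' z hz2) (hnot z hz1)
      · have hQ' : Qlist B α fan y' = (fan (dlt B α y') y').verts := by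
          rw [Qlist]; exact dif_neg (fun hc => hhit' hc.2)
        refine Or.inl fun z hz1 hz2 => ?_
        rw [hQ] at hz1
        rw [hQ'] at hz2
        exact hv0 z (hvv z hz1 hz2) (hnot z hz1)

lemma disjC : ∀ (o : Ordinal) (y y' : V), Elig D B α y → Elig D B α y' → y ≠ y' →
    dlt B α y < o → dlt B α y' < o →
    (∀ z, z ∈ Qlist B α fan y → z ∈ Qlist B α fan y' → z = v 0) ∨
      Relation.TransGen (Step B α fan) y y' ∨ Relation.TransGen (Step B α fan) y' y := by
  intro o
  induction o using Ordinal.induction with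
  | h o IH =>
    intro y y' hy hy' hne h1 h2
    rcases le_total (dlt B α y') (dlt B α y) with hle | hle
    · exact disjCore D B α v fan Hfan1 Hfan2 Hint o IH hy hy' hne hle h1
    · rcases disjCore D B α v fan Hfan1 Hfan2 Hint o IH hy' hy hne.symm hle h2 with
        hL | hT | hT'
      · exact Or.inl fun z hz1 hz2 => hL z hz2 hz1
      · exact Or.inr (Or.inr hT)
      · exact Or.inr (Or.inl hT')

omit Hfan1 Hfan2 Hint in
lemma elig_of_entW {u : V} (hu : u ∈ entrance D (Uset B α)) : Elig D B α u := by
  obtain ⟨huW, z, hz, hzD⟩ := hu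
  have hin : inW B α u := huW
  exact ⟨hin, mem_Uset_dlt_succ B α hin, z,
    fun hc => hz (Uset_succ_sub B (dlt_spec B α hin).1 hc), hzD⟩

lemma mainAux (r : V) (hroot' : ∀ β < α, r ∉ B β) :
    IsBubble D r (v 0) (Uset B α) := by
  constructor
  · intro hr
    rcases (mem_Uset B).1 hr with ⟨β, h1, h2⟩
    exact hroot' β h1 h2
  · refine ⟨fun u => if hu : Elig D B α u then
        ⟨Qlist B α fan u, Q_ne D B α v fan Hfan1 Hfan2 Hint hu,
          (INV' D B α v fan Hfan1 Hfan2 Hint hu).1⟩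
      else ⟨[u], by simp, List.nodup_singleton u⟩, ?_, ?_⟩
    · intro u hu
      have he := elig_of_entW D B α hu
      simp only [dif_pos he]
      obtain ⟨hN, hH, hL, hS, hE⟩ := INV' D B α v fan Hfan1 Hfan2 Hint he
      have hsub : ∀ z ∈ Qlist B α fan u, z ∈ Uset B α :=
        fun z hz => Uset_succ_sub B (dlt_spec B α he.1).1 (hS z hz)
      refine ⟨?_, ?_, ?_⟩
      · intro e he'
        have he2 : e ∈ (Qlist B α fan u).zip (Qlist B α fan u).tail := he'
        rw [zip_tail_eq_zc] at he2
        have hm := mem_zc _ e he2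
        exact ⟨hE e he2, hsub _ hm.1, hsub _ hm.2⟩
      · have h1 := List.head?_eq_head (Q_ne D B α v fan Hfan1 Hfan2 Hint he)
        rw [hH] at h1
        exact (Option.some.inj h1).symm
      · have h1 := List.getLast?_eq_getLast (l := Qlist B α fan u)
          (Q_ne D B α v fan Hfan1 Hfan2 Hint he)
        rw [hL] at h1
        exact (Option.some.inj h1).symm
    · intro u hu u' hu' hneq
      have he := elig_of_entW D B α hu
      have he' := elig_of_entW D B α hu'
      simp only [dif_pos he, dif_pos he']
      have hv0u : v 0 ∈ Qlist B α fan u :=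
        List.mem_of_mem_getLast? (INV' D B α v fan Hfan1 Hfan2 Hint he).2.2.1
      have hv0u' : v 0 ∈ Qlist B α fan u' :=
        List.mem_of_mem_getLast? (INV' D B α v fan Hfan1 Hfan2 Hint he').2.2.1
      apply Set.eq_of_subset_of_subset
      · rintro z ⟨hz1, hz2⟩
        have hz1' : z ∈ Qlist B α fan u := hz1
        have hz2' : z ∈ Qlist B α fan u' := hz2
        rcases disjC D B α v fan Hfan1 Hfan2 Hint
            (max (dlt B α u) (dlt B α u') + 1) u u' he he' hneq
            (lt_of_le_of_lt (le_max_left _ _) (lt_add_one_self _))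
            (lt_of_le_of_lt (le_max_right _ _) (lt_add_one_self _)) with hL | hT | hT'
        · exact hL z hz1' hz2'
        · have h1 : u' = v 0 :=
            TGE D B α v fan Hfan1 Hfan2 Hint he hT (dlt_spec B α he.1).1 hu'
          rw [Qtriv D B α v fan Hfan1 Hfan2 Hint he' h1] at hz2'
          simpa using hz2'
        · have h1 : u = v 0 :=
            TGE D B α v fan Hfan1 Hfan2 Hint he' hT' (dlt_spec B α he'.1).1 hu
          rw [Qtriv D B α v fan Hfan1 Hfan2 Hint he h1] at hz1'
          simpa using hz1'
      · intro z hz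
        rw [Set.mem_singleton_iff] at hz
        subst hz
        exact ⟨hv0u, hv0u'⟩

end WithAll

end BubbleChainAux

/-- Uniting bubbles along an ordinal-indexed sequence: if `B β` is a `v β`-bubble for
each `β < α` and each `v β` is either `v 0` or lies in the `D`-interior of
`⋃_{γ<β} B γ`, then `⋃_{β<α} B β` is a `v 0`-bubble. -/
theorem bubble_chain {V : Type u} [Infinite V] (r : V) (D : Set (V × V))
    (hroot : IsRooted D r) (α : Ordinal) (B : Ordinal → Set V) (v : Ordinal → V)
    (hv : ∀ β < α, v β ≠ r)
    (hB : ∀ β < α, IsBubble D r (v β) (B β))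
    (h : ∀ β < α, v β = v 0 ∨ v β ∈ interiorSet D (⋃ γ < β, B γ)) :
    IsBubble D r (v 0) (⋃ β < α, B β) := by
  classical
  have hEx : ∀ β : Ordinal, ∃ F : V → DiPath V, β < α →
      (∀ u ∈ entrance D (B β), IsPath (D ∩ B β ×ˢ B β) u (v β) (F u)) ∧
      (∀ u ∈ entrance D (B β), ∀ u' ∈ entrance D (B β), u ≠ u' →
        (F u).vertexSet ∩ (F u').vertexSet = {v β}) := by
    intro β
    by_cases hβ : β < α
    · obtain ⟨F, h1, h2⟩ := (hB β hβ).2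
      exact ⟨F, fun _ => ⟨h1, h2⟩⟩
    · exact ⟨fun u => ⟨[u], by simp, List.nodup_singleton u⟩, fun hc => absurd hc hβ⟩
  choose fan hfan using hEx
  have H1 : ∀ β < α, ∀ u ∈ entrance D (B β),
      IsPath (D ∩ B β ×ˢ B β) u (v β) (fan β u) := fun β hβ => (hfan β hβ).1
  have H2 : ∀ β < α, ∀ u ∈ entrance D (B β), ∀ u' ∈ entrance D (B β), u ≠ u' →
      (fan β u).vertexSet ∩ (fan β u').vertexSet = {v β} := fun β hβ => (hfan β hβ).2
  have H3 : ∀ β < α, v β = v 0 ∨ v β ∈ interiorSet D (Uset B β) := h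
  have hroot' : ∀ β < α, r ∉ B β := fun β hβ => (hB β hβ).1
  exact mainAux D B α v fan H1 H2 H3 r hroot'

end FlamePaper
end

section
/- For every rooted digraph D with root r and every v ∈ V−r, the set bubb_D(v) of v-bubbles of D is closed under arbitrary unions; in particular bubb_D(v) has a ⊆-largest element, namely the union B_{v,D} of all v-bubbles. -/
namespace FlamePaper

universe u
variable {V : Type u}

/-! A set `B` is a `v`-bubble exactly when it carries an *infan routing*: a successor function
whose orbits, started at the entrance vertices of `B`, are the paths of a `v`-infan in `B`.
Routings, unlike infans, can be glued. Given routings for `B₁` and `B₂`, keep the first on its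
support and use the second outside `B₁`: an orbit of the second routing can only enter `B₁`
through an entrance vertex of `B₁`, and from there the first routing takes it to `v`. A chain of
routings, each extending the previous ones, has their union as an upper bound. By Zorn's lemma
there is a maximal routing with region inside `⋃ S`, and by maximality it absorbs every member
of `S`. -/

namespace DiPath

variable {P : DiPath V} {x y z : V}

theorem mem_edges_iff :
    (x, y) ∈ P.edges ↔
      ∃ i, ∃ h : i + 1 < P.verts.length, P.verts[i] = x ∧ P.verts[i + 1] = y := by
  simp only [edges, Set.mem_ofPred_eq, List.mem_iff_getElem, List.length_zip, List.length_tail,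
    List.getElem_zip, List.getElem_tail, Prod.mk.injEq]
  constructor
  · rintro ⟨i, hi, h⟩
    exact ⟨i, by omega, h⟩
  · rintro ⟨i, hi, h⟩
    exact ⟨i, by omega, h⟩

theorem first_mem : P.first ∈ P.vertexSet := List.head_mem P.ne

theorem last_mem : P.last ∈ P.vertexSet := List.getLast_mem P.ne

theorem fst_mem_of_mem_edges (h : (x, y) ∈ P.edges) : x ∈ P.vertexSet := by
  obtain ⟨i, hi, rfl, -⟩ := mem_edges_iff.1 h
  exact List.getElem_mem _

theorem snd_mem_of_mem_edges (h : (x, y) ∈ P.edges) : y ∈ P.vertexSet := by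
  obtain ⟨i, hi, -, rfl⟩ := mem_edges_iff.1 h
  exact List.getElem_mem _

theorem fst_eq_of_mem_edges (hx : (x, z) ∈ P.edges) (hy : (y, z) ∈ P.edges) : x = y := by
  obtain ⟨i, hi, rfl, hiz⟩ := mem_edges_iff.1 hx
  obtain ⟨j, hj, rfl, hjz⟩ := mem_edges_iff.1 hy
  have : i + 1 = j + 1 := P.nodup.getElem_inj_iff.1 (hiz.trans hjz.symm)
  simp only [Nat.add_right_cancel this]

theorem snd_ne_first (h : (x, y) ∈ P.edges) : y ≠ P.first := by
  obtain ⟨i, hi, -, rfl⟩ := mem_edges_iff.1 h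
  rw [first, List.head_eq_getElem, Ne, P.nodup.getElem_inj_iff]
  omega

theorem exists_mem_edges_of_ne_last (hx : x ∈ P.vertexSet) (hxl : x ≠ P.last) :
    ∃ y, (x, y) ∈ P.edges := by
  obtain ⟨i, hi, rfl⟩ := List.mem_iff_getElem.1 hx
  have hi' : i + 1 < P.verts.length := by
    by_contra! h
    exact hxl (by simp only [last, List.getLast_eq_getElem]; congr 1; omega)
  exact ⟨_, mem_edges_iff.2 ⟨i, hi', rfl, rfl⟩⟩

theorem vertexSet_subset {B : Set V} (hP : P.edges ⊆ B ×ˢ B) (hfirst : P.first ∈ B) :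
    P.vertexSet ⊆ B := by
  intro x hx
  obtain ⟨i, hi, rfl⟩ := List.mem_iff_getElem.1 hx
  cases i with
  | zero => simpa only [first, List.head_eq_getElem] using hfirst
  | succ i => exact (hP (mem_edges_iff.2 ⟨i, hi, rfl, rfl⟩)).2

theorem exists_iterate_eq_last {s : V → V}
    (hs : ∀ y ∈ P.vertexSet, y ≠ P.last → (y, s y) ∈ P.edges) (hx : x ∈ P.vertexSet) :
    ∃ n, s^[n] x = P.last := by
  obtain ⟨i, hi, rfl⟩ := List.mem_iff_getElem.1 hx
  induction h : P.verts.length - 1 - i generalizing i with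
  | zero =>
    refine ⟨0, ?_⟩
    rw [Function.iterate_zero_apply, last, List.getLast_eq_getElem]
    congr 1
    omega
  | succ k ih =>
    have hne : P.verts[i] ≠ P.last := by
      rw [last, List.getLast_eq_getElem, Ne, P.nodup.getElem_inj_iff]
      omega
    obtain ⟨j, hj, hji, hjs⟩ := mem_edges_iff.1 (hs _ (List.getElem_mem hi) hne)
    obtain rfl : j = i := P.nodup.getElem_inj_iff.1 hji
    obtain ⟨n, hn⟩ := ih (j + 1) hj (List.getElem_mem hj) (by omega)
    exact ⟨n + 1, by rwa [Function.iterate_succ_apply, ← hjs]⟩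

end DiPath

section Orbit

variable (s : V → V) (v x : V)

/-- The first time the `s`-orbit of `x` visits `v`, or `0` if it never does. -/
noncomputable def hitTime : ℕ := sInf {n | s^[n] x = v}

variable {s v x}

theorem iterate_hitTime (h : ∃ n, s^[n] x = v) : s^[hitTime s v x] x = v := Nat.sInf_mem h

theorem iterate_ne_of_lt_hitTime {k : ℕ} (hk : k < hitTime s v x) : s^[k] x ≠ v :=
  Nat.notMem_of_lt_sInf hk

theorem iterate_inj_of_le_hitTime {i j : ℕ} (hi : i ≤ hitTime s v x) (hj : j ≤ hitTime s v x)
    (h : s^[i] x = s^[j] x) : i = j := by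
  wlog hij : i < j generalizing i j
  · rcases (not_lt.1 hij).eq_or_lt with rfl | hji
    · rfl
    · exact (this hj hi h.symm hji).symm
  have hv : s^[hitTime s v x] x = v :=
    Nat.sInf_mem (Nat.nonempty_of_pos_sInf (show 0 < hitTime s v x by omega))
  have hk : i + (hitTime s v x - j) < hitTime s v x := by omega
  refine absurd ?_ (iterate_ne_of_lt_hitTime hk)
  rw [add_comm, Function.iterate_add_apply, h, ← Function.iterate_add_apply,
    Nat.sub_add_cancel hj, hv]

variable (s v x)

noncomputable def orbitPath : DiPath V where
  verts := (List.range (hitTime s v x + 1)).map (s^[·] x)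
  ne := by simp
  nodup := List.Nodup.map_on (fun i hi j hj h => iterate_inj_of_le_hitTime
    (Nat.lt_succ_iff.1 (List.mem_range.1 hi)) (Nat.lt_succ_iff.1 (List.mem_range.1 hj)) h)
    List.nodup_range

variable {s v x}

theorem orbitPath_first : (orbitPath s v x).first = x := by
  simp [orbitPath, DiPath.first, List.head_eq_getElem]

theorem orbitPath_last (h : ∃ n, s^[n] x = v) : (orbitPath s v x).last = v := by
  simp only [orbitPath, DiPath.last, List.getLast_eq_getElem, List.getElem_map,
    List.length_map, List.length_range, List.getElem_range, Nat.add_sub_cancel]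
  exact iterate_hitTime h

theorem exists_of_mem_orbitPath {y : V} (hy : y ∈ (orbitPath s v x).vertexSet) :
    ∃ i ≤ hitTime s v x, s^[i] x = y := by
  simpa only [orbitPath, DiPath.vertexSet, Set.mem_ofPred_eq, List.mem_map, List.mem_range,
    Nat.lt_succ_iff] using hy

theorem exists_of_mem_orbitPath_edges {y z : V} (h : (y, z) ∈ (orbitPath s v x).edges) :
    ∃ i < hitTime s v x, s^[i] x = y ∧ s^[i + 1] x = z := by
  obtain ⟨i, hi, hy, hz⟩ := DiPath.mem_edges_iff.1 h
  simp only [orbitPath, List.length_map, List.length_range, List.getElem_map,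
    List.getElem_range] at hi hy hz
  exact ⟨i, by omega, hy, hz⟩

end Orbit

theorem mem_entrance_of_subset {D : Set (V × V)} {X Y : Set V} {x : V} (hXY : X ⊆ Y)
    (hx : x ∈ X) (h : x ∈ entrance D Y) : x ∈ entrance D X :=
  ⟨hx, h.2.imp fun _ hu => ⟨fun hX => hu.1 (hXY hX), hu.2⟩⟩

/-- An infan for `region` encoded by a successor function: the paths are the `next`-orbits of
the entrance vertices, run until they reach `v`. -/
structure InfanRouting (D : Set (V × V)) (v : V) where
  region : Set V
  support : Set V
  next : V → V
  support_subset : support ⊆ region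
  entrance_subset : entrance D region ⊆ support
  mapsTo : ∀ x ∈ support, x ≠ v → (x, next x) ∈ D ∧ next x ∈ support
  injOn : ∀ x ∈ support, ∀ y ∈ support, x ≠ v → y ≠ v → next x = next y → next x ≠ v → x = y
  next_mem_entrance : ∀ x ∈ support, x ≠ v → next x ∈ entrance D region → next x = v
  reaches : ∀ x ∈ support, ∃ n, next^[n] x = v

namespace InfanRouting

variable {D : Set (V × V)} {v : V}

instance : Preorder (InfanRouting D v) where
  le R R' := R.region ⊆ R'.region ∧ R.support ⊆ R'.support ∧ Set.EqOn R'.next R.next R.support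
  le_refl R := ⟨subset_rfl, subset_rfl, Set.eqOn_refl _ _⟩
  le_trans _ _ _ h₁₂ h₂₃ := ⟨h₁₂.1.trans h₂₃.1, h₁₂.2.1.trans h₂₃.2.1,
    fun _ hx => (h₂₃.2.2 (h₁₂.2.1 hx)).trans (h₁₂.2.2 hx)⟩

variable (R : InfanRouting D v)

theorem next_mem_region {x : V} (hx : x ∈ R.support) (hxv : x ≠ v) : R.next x ∈ R.region :=
  R.support_subset (R.mapsTo x hx hxv).2

theorem induction_on {p : V → Prop} (hv : p v)
    (step : ∀ x ∈ R.support, x ≠ v → p (R.next x) → p x) {x : V} (hx : x ∈ R.support) :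
    p x := by
  obtain ⟨n, hn⟩ := R.reaches x hx
  induction n generalizing x with
  | zero =>
    rw [Function.iterate_zero_apply] at hn
    exact hn ▸ hv
  | succ n ih =>
    by_cases hxv : x = v
    · exact hxv ▸ hv
    · exact step x hx hxv (ih (R.mapsTo x hx hxv).2 hn)

theorem reaches_of_eqOn {s : V → V} (hs : Set.EqOn s R.next R.support) {x : V}
    (hx : x ∈ R.support) : ∃ n, s^[n] x = v :=
  R.induction_on (p := fun y => ∃ n, s^[n] y = v) ⟨0, rfl⟩
    (fun y hy _ ⟨n, hn⟩ => ⟨n + 1, by rwa [Function.iterate_succ_apply, hs hy]⟩) hx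

theorem iterate_mem_support {x : V} (hx : x ∈ R.support) {n : ℕ}
    (hn : ∀ k < n, R.next^[k] x ≠ v) : R.next^[n] x ∈ R.support := by
  induction n with
  | zero => exact hx
  | succ n ih =>
    rw [Function.iterate_succ_apply']
    exact (R.mapsTo _ (ih fun k hk => hn k (by omega)) (hn n (by omega))).2

theorem iterate_eq_v_of_iterate_eq {u u' : V} (hu : u ∈ entrance D R.region)
    (hu' : u' ∈ entrance D R.region) (hne : u ≠ u') {i j : ℕ}
    (hi : ∀ k < i, R.next^[k] u ≠ v) (hj : ∀ k < j, R.next^[k] u' ≠ v)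
    (h : R.next^[i] u = R.next^[j] u') : R.next^[i] u = v := by
  have hmem {w : V} (hw : w ∈ entrance D R.region) {n : ℕ} (hn : ∀ k < n + 1, R.next^[k] w ≠ v) :
      R.next^[n] w ∈ R.support ∧ R.next^[n] w ≠ v :=
    ⟨R.iterate_mem_support (R.entrance_subset hw) fun k hk => hn k (by omega), hn n (by omega)⟩
  induction i generalizing j with
  | zero =>
    cases j with
    | zero => exact absurd h hne
    | succ j =>
      rw [Function.iterate_zero_apply] at h ⊢
      rw [h, Function.iterate_succ_apply'] at hu ⊢
      exact R.next_mem_entrance _ (hmem hu' hj).1 (hmem hu' hj).2 hu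
  | succ i ih =>
    cases j with
    | zero =>
      rw [Function.iterate_succ_apply'] at h ⊢
      exact R.next_mem_entrance _ (hmem hu hi).1 (hmem hu hi).2 (h ▸ hu')
    | succ j =>
      by_contra hz
      simp only [Function.iterate_succ_apply'] at h hz
      have := R.injOn _ (hmem hu hi).1 _ (hmem hu' hj).1 (hmem hu hi).2 (hmem hu' hj).2 h hz
      exact (hmem hu hi).2 (ih (fun k hk => hi k (by omega)) (fun k hk => hj k (by omega)) this)

theorem isPath_orbitPath {u : V} (hu : u ∈ R.support) :
    IsPath (D ∩ R.region ×ˢ R.region) u v (orbitPath R.next v u) := by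
  refine ⟨fun e he => ?_, orbitPath_first, orbitPath_last (R.reaches u hu)⟩
  obtain ⟨i, hi, hx, hy⟩ := exists_of_mem_orbitPath_edges he
  have hmem := R.iterate_mem_support hu fun k hk => iterate_ne_of_lt_hitTime (hk.trans hi)
  have hne : R.next^[i] u ≠ v := iterate_ne_of_lt_hitTime hi
  rw [← Prod.mk.eta (p := e), ← hx, ← hy, Function.iterate_succ_apply']
  exact ⟨(R.mapsTo _ hmem hne).1, R.support_subset hmem, R.next_mem_region hmem hne⟩

theorem isBubble {r : V} (hr : r ∉ R.region) : IsBubble D r v R.region := by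
  refine ⟨hr, orbitPath R.next v,
    fun u hu => R.isPath_orbitPath (R.entrance_subset hu), fun u hu u' hu' hne => ?_⟩
  refine subset_antisymm ?_ ?_
  · rintro x ⟨hx, hx'⟩
    obtain ⟨i, hi, rfl⟩ := exists_of_mem_orbitPath hx
    obtain ⟨j, hj, hij⟩ := exists_of_mem_orbitPath hx'
    exact R.iterate_eq_v_of_iterate_eq hu hu' hne
      (fun k hk => iterate_ne_of_lt_hitTime (hk.trans_le hi))
      (fun k hk => iterate_ne_of_lt_hitTime (hk.trans_le hj)) hij.symm
  · rw [Set.singleton_subset_iff]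
    have hlast {w} (hw : w ∈ entrance D R.region) : v ∈ (orbitPath R.next v w).vertexSet :=
      (orbitPath_last (R.reaches w (R.entrance_subset hw))).subst DiPath.last_mem
    exact ⟨hlast hu, hlast hu'⟩

end InfanRouting

section Infan

variable {v : V} {E : Set V} {F : V → DiPath V}

theorem eq_of_mem_vertexSet_of_ne
    (hdisj : ∀ u ∈ E, ∀ u' ∈ E, u ≠ u' → (F u).vertexSet ∩ (F u').vertexSet = {v})
    {x u u' : V} (hu : u ∈ E) (hu' : u' ∈ E) (hx : x ∈ (F u).vertexSet)
    (hx' : x ∈ (F u').vertexSet) (hxv : x ≠ v) : u = u' := by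
  by_contra hne
  exact hxv (hdisj u hu u' hu' hne ▸ ⟨hx, hx'⟩ : x ∈ ({v} : Set V))

theorem exists_next_mem_edges (hlast : ∀ u ∈ E, (F u).last = v)
    (hdisj : ∀ u ∈ E, ∀ u' ∈ E, u ≠ u' → (F u).vertexSet ∩ (F u').vertexSet = {v}) :
    ∃ next : V → V, ∀ u ∈ E, ∀ x ∈ (F u).vertexSet, x ≠ v → (x, next x) ∈ (F u).edges := by
  classical
  refine ⟨fun x => if h : ∃ y, ∃ u ∈ E, (x, y) ∈ (F u).edges then h.choose else x,
    fun u hu x hx hxv => ?_⟩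
  have h : ∃ y, ∃ u ∈ E, (x, y) ∈ (F u).edges :=
    (DiPath.exists_mem_edges_of_ne_last hx (by rwa [hlast u hu])).imp fun _ hy => ⟨u, hu, hy⟩
  obtain ⟨u', hu', he⟩ := h.choose_spec
  obtain rfl := eq_of_mem_vertexSet_of_ne hdisj hu' hu (DiPath.fst_mem_of_mem_edges he) hx hxv
  simpa only [dif_pos h] using he

end Infan

theorem IsBubble.exists_infanRouting {D : Set (V × V)} {r v : V} {B : Set V}
    (hB : IsBubble D r v B) : ∃ R : InfanRouting D v, R.region = B := by
  obtain ⟨-, F, hF, hdisj⟩ := hB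
  have hfirst {u} (hu : u ∈ entrance D B) : u ∈ (F u).vertexSet := by
    simpa only [(hF u hu).2.1] using (F u).first_mem
  obtain ⟨next, hnext⟩ := exists_next_mem_edges (fun u hu => (hF u hu).2.2) hdisj
  refine ⟨{
    region := B
    support := ⋃ u ∈ entrance D B, (F u).vertexSet
    next := next
    support_subset := Set.iUnion₂_subset fun u hu =>
      DiPath.vertexSet_subset (fun e he => ((hF u hu).1 he).2) (by rw [(hF u hu).2.1]; exact hu.1)
    entrance_subset := fun u hu => Set.mem_biUnion hu (hfirst hu)
    mapsTo := fun x hx hxv => by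
      obtain ⟨u, hu, hxu⟩ := Set.mem_iUnion₂.1 hx
      have he := hnext u hu x hxu hxv
      exact ⟨((hF u hu).1 he).1, Set.mem_biUnion hu (DiPath.snd_mem_of_mem_edges he)⟩
    injOn := fun x hx y hy hxv hyv hxy hz => by
      obtain ⟨u, hu, hxu⟩ := Set.mem_iUnion₂.1 hx
      obtain ⟨u', hu', hyu'⟩ := Set.mem_iUnion₂.1 hy
      have hex := hnext u hu x hxu hxv
      have hey := hxy ▸ hnext u' hu' y hyu' hyv
      obtain rfl := eq_of_mem_vertexSet_of_ne hdisj hu hu' (DiPath.snd_mem_of_mem_edges hex)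
        (DiPath.snd_mem_of_mem_edges hey) hz
      exact DiPath.fst_eq_of_mem_edges hex hey
    next_mem_entrance := fun x hx hxv hent => by
      by_contra hz
      obtain ⟨u, hu, hxu⟩ := Set.mem_iUnion₂.1 hx
      have he := hnext u hu x hxu hxv
      have := eq_of_mem_vertexSet_of_ne hdisj hu hent (DiPath.snd_mem_of_mem_edges he)
        (hfirst hent) hz
      exact DiPath.snd_ne_first he ((hF u hu).2.1.trans this).symm
    reaches := fun x hx => by
      obtain ⟨u, hu, hxu⟩ := Set.mem_iUnion₂.1 hx
      have := DiPath.exists_iterate_eq_last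
        (fun y hy hyl => hnext u hu y hy ((hF u hu).2.2 ▸ hyl)) hxu
      rwa [(hF u hu).2.2] at this }, rfl⟩

namespace InfanRouting

variable {D : Set (V × V)} {v : V} (R₁ R₂ : InfanRouting D v)

open Classical in
noncomputable def unionNext : V → V := R₁.support.piecewise R₁.next R₂.next

variable {R₁ R₂} {x : V}

open Classical in
theorem unionNext_of_mem (hx : x ∈ R₁.support) : unionNext R₁ R₂ x = R₁.next x :=
  Set.piecewise_eq_of_mem _ _ _ hx

open Classical in
theorem unionNext_of_notMem (hx : x ∉ R₁.region) : unionNext R₁ R₂ x = R₂.next x :=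
  Set.piecewise_eq_of_notMem _ _ _ fun h => hx (R₁.support_subset h)

theorem next_mem_entrance_of_notMem (hx : x ∈ R₂.support) (hxv : x ≠ v)
    (hx₁ : x ∉ R₁.region) (h : R₂.next x ∈ R₁.region) : R₂.next x ∈ entrance D R₁.region :=
  ⟨h, x, hx₁, (R₂.mapsTo x hx hxv).1⟩

theorem exists_iterate_unionNext_eq (hx : x ∈ R₂.support) :
    x ∉ R₁.region → ∃ n, (unionNext R₁ R₂)^[n] x = v := by
  refine R₂.induction_on (p := fun y => y ∉ R₁.region → ∃ n, (unionNext R₁ R₂)^[n] y = v)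
    (fun _ => ⟨0, rfl⟩) (fun y hy hyv ih hy₁ => ?_) hx
  obtain ⟨n, hn⟩ : ∃ n, (unionNext R₁ R₂)^[n] (R₂.next y) = v := by
    by_cases h : R₂.next y ∈ R₁.region
    · exact R₁.reaches_of_eqOn (fun _ => unionNext_of_mem)
        (R₁.entrance_subset (next_mem_entrance_of_notMem hy hyv hy₁ h))
    · exact ih h
  exact ⟨n + 1, by rwa [Function.iterate_succ_apply, unionNext_of_notMem hy₁]⟩

variable (R₁ R₂)

noncomputable def union : InfanRouting D v where
  region := R₁.region ∪ R₂.region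
  support := R₁.support ∪ (R₂.support \ R₁.region)
  next := unionNext R₁ R₂
  support_subset :=
    Set.union_subset_union R₁.support_subset (Set.sdiff_subset.trans R₂.support_subset)
  entrance_subset u hu := by
    by_cases hu₁ : u ∈ R₁.region
    · exact Or.inl (R₁.entrance_subset (mem_entrance_of_subset Set.subset_union_left hu₁ hu))
    · exact Or.inr ⟨R₂.entrance_subset (mem_entrance_of_subset Set.subset_union_right
        (hu.1.resolve_left hu₁) hu), hu₁⟩
  mapsTo := by
    rintro x (hx | ⟨hx, hx₁⟩) hxv
    · rw [unionNext_of_mem hx]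
      exact ⟨(R₁.mapsTo x hx hxv).1, Or.inl (R₁.mapsTo x hx hxv).2⟩
    · rw [unionNext_of_notMem hx₁]
      refine ⟨(R₂.mapsTo x hx hxv).1, ?_⟩
      by_cases h : R₂.next x ∈ R₁.region
      · exact Or.inl (R₁.entrance_subset (next_mem_entrance_of_notMem hx hxv hx₁ h))
      · exact Or.inr ⟨(R₂.mapsTo x hx hxv).2, h⟩
  injOn := by
    have hmixed {x y} (hx : x ∈ R₁.support) (hy : y ∈ R₂.support) (hy₁ : y ∉ R₁.region)
        (hxv : x ≠ v) (hyv : y ≠ v) (h : R₁.next x = R₂.next y) : R₁.next x = v :=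
      R₁.next_mem_entrance x hx hxv
        (h ▸ next_mem_entrance_of_notMem hy hyv hy₁ (h ▸ R₁.next_mem_region hx hxv))
    rintro x (hx | ⟨hx, hx₁⟩) y (hy | ⟨hy, hy₁⟩) hxv hyv hxy hz
    · rw [unionNext_of_mem hx, unionNext_of_mem hy] at hxy
      rw [unionNext_of_mem hx] at hz
      exact R₁.injOn x hx y hy hxv hyv hxy hz
    · rw [unionNext_of_mem hx, unionNext_of_notMem hy₁] at hxy
      rw [unionNext_of_mem hx] at hz
      exact absurd (hmixed hx hy hy₁ hxv hyv hxy) hz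
    · rw [unionNext_of_notMem hx₁, unionNext_of_mem hy] at hxy
      rw [unionNext_of_notMem hx₁, hxy] at hz
      exact absurd (hmixed hy hx hx₁ hyv hxv hxy.symm) hz
    · rw [unionNext_of_notMem hx₁, unionNext_of_notMem hy₁] at hxy
      rw [unionNext_of_notMem hx₁] at hz
      exact R₂.injOn x hx y hy hxv hyv hxy hz
  next_mem_entrance := by
    rintro x (hx | ⟨hx, hx₁⟩) hxv hent
    · rw [unionNext_of_mem hx] at hent ⊢
      exact R₁.next_mem_entrance x hx hxv
        (mem_entrance_of_subset Set.subset_union_left (R₁.next_mem_region hx hxv) hent)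
    · rw [unionNext_of_notMem hx₁] at hent ⊢
      exact R₂.next_mem_entrance x hx hxv
        (mem_entrance_of_subset Set.subset_union_right (R₂.next_mem_region hx hxv) hent)
  reaches := by
    rintro x (hx | ⟨hx, hx₁⟩)
    · exact R₁.reaches_of_eqOn (fun _ => unionNext_of_mem) hx
    · exact exists_iterate_unionNext_eq hx hx₁

theorem le_union : R₁ ≤ R₁.union R₂ :=
  ⟨Set.subset_union_left, Set.subset_union_left, fun _ => unionNext_of_mem⟩

variable {c : Set (InfanRouting D v)}

open Classical in
noncomputable def sUnionNext (c : Set (InfanRouting D v)) (x : V) : V :=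
  if h : ∃ R ∈ c, x ∈ R.support then h.choose.next x else x

theorem sUnionNext_eq (hc : IsChain (· ≤ ·) c) {R : InfanRouting D v} (hR : R ∈ c) {x : V}
    (hx : x ∈ R.support) : sUnionNext c x = R.next x := by
  have h : ∃ R ∈ c, x ∈ R.support := ⟨R, hR, hx⟩
  rw [sUnionNext, dif_pos h]
  obtain ⟨hR', hx'⟩ := h.choose_spec
  rcases hc.total hR' hR with hle | hle
  · exact (hle.2.2 hx').symm
  · exact hle.2.2 hx

theorem exists_mem_support_of_isChain (hc : IsChain (· ≤ ·) c) {x y : V}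
    (hx : x ∈ ⋃ R ∈ c, R.support) (hy : y ∈ ⋃ R ∈ c, R.support) :
    ∃ R ∈ c, x ∈ R.support ∧ y ∈ R.support := by
  obtain ⟨R, hR, hxR⟩ := Set.mem_iUnion₂.1 hx
  obtain ⟨R', hR', hyR'⟩ := Set.mem_iUnion₂.1 hy
  rcases hc.total hR hR' with hle | hle
  · exact ⟨R', hR', hle.2.1 hxR, hyR'⟩
  · exact ⟨R, hR, hxR, hle.2.1 hyR'⟩

variable (c) in
noncomputable def sUnion (hc : IsChain (· ≤ ·) c) : InfanRouting D v where
  region := ⋃ R ∈ c, R.region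
  support := ⋃ R ∈ c, R.support
  next := sUnionNext c
  support_subset := Set.biUnion_mono subset_rfl fun R _ => R.support_subset
  entrance_subset u hu := by
    obtain ⟨R, hR, huR⟩ := Set.mem_iUnion₂.1 hu.1
    exact Set.mem_biUnion hR
      (R.entrance_subset (mem_entrance_of_subset (Set.subset_biUnion_of_mem hR) huR hu))
  mapsTo x hx hxv := by
    obtain ⟨R, hR, hxR⟩ := Set.mem_iUnion₂.1 hx
    rw [sUnionNext_eq hc hR hxR]
    exact ⟨(R.mapsTo x hxR hxv).1, Set.mem_biUnion hR (R.mapsTo x hxR hxv).2⟩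
  injOn x hx y hy hxv hyv hxy hz := by
    obtain ⟨R, hR, hxR, hyR⟩ := exists_mem_support_of_isChain hc hx hy
    rw [sUnionNext_eq hc hR hxR, sUnionNext_eq hc hR hyR] at hxy
    rw [sUnionNext_eq hc hR hxR] at hz
    exact R.injOn x hxR y hyR hxv hyv hxy hz
  next_mem_entrance x hx hxv hent := by
    obtain ⟨R, hR, hxR⟩ := Set.mem_iUnion₂.1 hx
    rw [sUnionNext_eq hc hR hxR] at hent ⊢
    exact R.next_mem_entrance x hxR hxv (mem_entrance_of_subset
      (Set.subset_biUnion_of_mem hR) (R.next_mem_region hxR hxv) hent)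
  reaches x hx := by
    obtain ⟨R, hR, hxR⟩ := Set.mem_iUnion₂.1 hx
    exact R.reaches_of_eqOn (fun _ => sUnionNext_eq hc hR) hxR

theorem le_sUnion (hc : IsChain (· ≤ ·) c) {R : InfanRouting D v} (hR : R ∈ c) :
    R ≤ sUnion c hc :=
  ⟨Set.subset_biUnion_of_mem hR, Set.subset_biUnion_of_mem hR, fun _ => sUnionNext_eq hc hR⟩

theorem exists_region_eq_sUnion {S : Set (Set V)}
    (hS : ∀ B ∈ S, ∃ R : InfanRouting D v, R.region = B) :
    ∃ R : InfanRouting D v, R.region = ⋃₀ S := by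
  obtain ⟨m, hm, hmax⟩ := zorn_le₀ {R : InfanRouting D v | R.region ⊆ ⋃₀ S} fun c hcS hc =>
    ⟨sUnion c hc, Set.iUnion₂_subset fun R hR => hcS hR, fun R hR => le_sUnion hc hR⟩
  refine ⟨m, hm.antisymm (Set.sUnion_subset fun B hB => ?_)⟩
  obtain ⟨R, rfl⟩ := hS B hB
  have hmR : m.union R ≤ m :=
    hmax (Set.union_subset hm (Set.subset_sUnion_of_mem hB)) (m.le_union R)
  exact Set.subset_union_right.trans hmR.1

end InfanRouting

theorem isBubble_iff_exists_infanRouting {D : Set (V × V)} {r v : V} {B : Set V} :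
    IsBubble D r v B ↔ r ∉ B ∧ ∃ R : InfanRouting D v, R.region = B := by
  refine ⟨fun h => ⟨h.1, h.exists_infanRouting⟩, ?_⟩
  rintro ⟨hr, R, rfl⟩
  exact R.isBubble hr

theorem bubbles_closed_union_general {V : Type u} (r : V) (D : Set (V × V)) (v : V) :
    (∀ S ⊆ bubbles D r v, ⋃₀ S ∈ bubbles D r v) ∧
      maxBubble D r v ∈ bubbles D r v ∧
      ∀ B ∈ bubbles D r v, B ⊆ maxBubble D r v := by
  have hunion (S) (hS : S ⊆ bubbles D r v) : ⋃₀ S ∈ bubbles D r v := by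
    have hS' B (hB : B ∈ S) := isBubble_iff_exists_infanRouting.1 (hS hB)
    refine isBubble_iff_exists_infanRouting.2 ⟨?_, InfanRouting.exists_region_eq_sUnion
      fun B hB => (hS' B hB).2⟩
    rintro ⟨B, hB, hrB⟩
    exact (hS' B hB).1 hrB
  exact ⟨hunion, hunion _ subset_rfl, fun B hB => Set.subset_sUnion_of_mem hB⟩

/-- `bubb_D(v)` is closed under arbitrary unions; in particular it has a `⊆`-largest
element, namely `B_{v,D}`, the union of all `v`-bubbles. -/
theorem bubbles_closed_union {V : Type u} [Infinite V] (r : V) (D : Set (V × V))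
    (hroot : IsRooted D r) (v : V) (hv : v ≠ r) :
    (∀ S ⊆ bubbles D r v, ⋃₀ S ∈ bubbles D r v) ∧
      maxBubble D r v ∈ bubbles D r v ∧
      ∀ B ∈ bubbles D r v, B ⊆ maxBubble D r v :=
  bubbles_closed_union_general r D v

end FlamePaper
end
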